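/- Fix ℓ > 0 and let w, v, A : ℝ → ℂ be smooth ℓ-periodic functions satisfying the coupled system −w'' + w = v + A' and −v'' + v = w on ℝ (i.e. Lw = v + dA/dt and Lv = w, where L = −d²/dt² + 1). Set m = (1/ℓ) ∫₀^ℓ A(t) dt, and let η : ℝ → ℂ be a smooth ℓ-periodic function satisfying −η'' + 2η = A − m (so that M(A) := (A − m) − η). Then ∫₀^ℓ w(t) · \overline{A'(t)} dt = ∫₀^ℓ (A(t) − m − η(t)) · \overline{A(t)} dt; in particular this integral is real and nonnegative. (This is the identity ∫_γ w (D/dt)Ā = ∫_γ M(A)·Ā used in the proof of the second variation formula.) -/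

import Mathlib

open intervalIntegral MeasureTheory Set

section helpers2
variable {f g : ℝ → ℂ} {ℓ : ℝ}

private lemma smooth_conj (hf : ContDiff ℝ (⊤:ℕ∞) f) :
    ContDiff ℝ (⊤:ℕ∞) (fun t => (starRingEnd ℂ) (f t)) :=
  (Complex.conjCLE.contDiff).comp hf

private lemma deriv_conj' (hf : Differentiable ℝ f) (t : ℝ) :
    deriv (fun s => (starRingEnd ℂ) (f s)) t = (starRingEnd ℂ) (deriv f t) :=
  (Complex.conjCLE.toContinuousLinearMap.hasFDerivAt.comp_hasDerivAt t (hf t).hasDerivAt).deriv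

private lemma diffble (hf : ContDiff ℝ (⊤:ℕ∞) f) : Differentiable ℝ f :=
  hf.differentiable (by simp)

private lemma derivSmooth (hf : ContDiff ℝ (⊤:ℕ∞) f) : ContDiff ℝ (⊤:ℕ∞) (deriv f) :=
  (contDiff_infty_iff_deriv.mp hf).2

private lemma periodic_deriv (hfp : Function.Periodic f ℓ) :
    Function.Periodic (deriv f) ℓ := by
  intro t
  have hfun : (fun s => f (s + ℓ)) = f := funext hfp
  rw [← deriv_comp_add_const f ℓ t, hfun]

private lemma periodic_conj (hfp : Function.Periodic f ℓ) :
    Function.Periodic (fun t => (starRingEnd ℂ) (f t)) ℓ := by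
  intro t; simp only [hfp t]

private lemma integral_deriv_periodic (hf : ContDiff ℝ (⊤:ℕ∞) f)
    (hfp : Function.Periodic f ℓ) :
    ∫ t in (0:ℝ)..ℓ, deriv f t = 0 := by
  rw [integral_deriv_eq_sub (fun x _ => ((diffble hf) x))
    (((derivSmooth hf).continuous).intervalIntegrable _ _)]
  have h0 : f ℓ = f 0 := by simpa using hfp 0
  simp [h0]

private lemma ibp_periodic (hf : ContDiff ℝ (⊤:ℕ∞) f) (hg : ContDiff ℝ (⊤:ℕ∞) g)
    (hfp : Function.Periodic f ℓ) (hgp : Function.Periodic g ℓ) :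
    ∫ t in (0:ℝ)..ℓ, f t * deriv g t = - ∫ t in (0:ℝ)..ℓ, deriv f t * g t := by
  rw [integral_mul_deriv_eq_deriv_mul
    (fun x _ => ((diffble hf) x).hasDerivAt)
    (fun x _ => ((diffble hg) x).hasDerivAt)
    (((derivSmooth hf).continuous).intervalIntegrable _ _)
    (((derivSmooth hg).continuous).intervalIntegrable _ _)]
  have h0 : f ℓ = f 0 := by simpa using hfp 0
  have h1 : g ℓ = g 0 := by simpa using hgp 0
  rw [h0, h1]; ring

end helpers2

/-- The identity `∫_γ w · (D/dt)Ā = ∫_γ M(A) · Ā` from the proof of the second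
variation formula: if `w, v, A` are smooth `ℓ`-periodic functions with
`Lw = v + A'` and `Lv = w` (where `L = −d²/dt² + 1`), `m` is the mean of `A`,
and `−η'' + 2η = A − m`, then `∫₀^ℓ w Ā' = ∫₀^ℓ (A − m − η) Ā`, and this
integral is real and nonnegative. -/
theorem integral_w_deriv_conj_A (ℓ : ℝ) (hℓ : 0 < ℓ)
    (w v A η : ℝ → ℂ)
    (hw : ContDiff ℝ (⊤ : ℕ∞) w) (hwper : Function.Periodic w ℓ)
    (hv : ContDiff ℝ (⊤ : ℕ∞) v) (hvper : Function.Periodic v ℓ)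
    (hA : ContDiff ℝ (⊤ : ℕ∞) A) (hAper : Function.Periodic A ℓ)
    (heqw : ∀ t : ℝ, -deriv (deriv w) t + w t = v t + deriv A t)
    (heqv : ∀ t : ℝ, -deriv (deriv v) t + v t = w t)
    (m : ℂ) (hm : m = (1 / (ℓ : ℂ)) * ∫ t in (0:ℝ)..ℓ, A t)
    (hη : ContDiff ℝ (⊤ : ℕ∞) η) (hηper : Function.Periodic η ℓ)
    (heqη : ∀ t : ℝ, -deriv (deriv η) t + 2 * η t = A t - m) :
    (∫ t in (0:ℝ)..ℓ, w t * (starRingEnd ℂ) (deriv A t)) =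
      (∫ t in (0:ℝ)..ℓ, (A t - m - η t) * (starRingEnd ℂ) (A t)) ∧
    (∫ t in (0:ℝ)..ℓ, w t * (starRingEnd ℂ) (deriv A t)).im = 0 ∧
    0 ≤ (∫ t in (0:ℝ)..ℓ, w t * (starRingEnd ℂ) (deriv A t)).re := by
  have hℓ0 : (ℓ:ℂ) ≠ 0 := by exact_mod_cast hℓ.ne'
  have hw' : ContDiff ℝ (⊤:ℕ∞) w := hw.of_le (by simp)
  have hv' : ContDiff ℝ (⊤:ℕ∞) v := hv.of_le (by simp)
  have hA' : ContDiff ℝ (⊤:ℕ∞) A := hA.of_le (by simp)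
  have hη' : ContDiff ℝ (⊤:ℕ∞) η := hη.of_le (by simp)
  set v1 := deriv v with hv1def
  set v2 := deriv v1 with hv2def
  set v3 := deriv v2 with hv3def
  set v4 := deriv v3 with hv4def
  have hv1 : ContDiff ℝ (⊤:ℕ∞) v1 := derivSmooth hv'
  have hv2 : ContDiff ℝ (⊤:ℕ∞) v2 := derivSmooth hv1
  have hv3 : ContDiff ℝ (⊤:ℕ∞) v3 := derivSmooth hv2
  have hv4 : ContDiff ℝ (⊤:ℕ∞) v4 := derivSmooth hv3
  have hv1per : Function.Periodic v1 ℓ := periodic_deriv hvper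
  have hv2per : Function.Periodic v2 ℓ := periodic_deriv hv1per
  have hv3per : Function.Periodic v3 ℓ := periodic_deriv hv2per
  set η1 := deriv η with hη1def
  set η2 := deriv η1 with hη2def
  have hη1 : ContDiff ℝ (⊤:ℕ∞) η1 := derivSmooth hη'
  have hη2 : ContDiff ℝ (⊤:ℕ∞) η2 := derivSmooth hη1
  have hη1per : Function.Periodic η1 ℓ := periodic_deriv hηper
  have hη2per : Function.Periodic η2 ℓ := periodic_deriv hη1per
  have cA : Continuous A := hA'.continuous
  have cv1 : Continuous v1 := hv1.continuous
  have cv3 : Continuous v3 := hv3.continuous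
  have cη : Continuous η := hη'.continuous
  have cη1 : Continuous η1 := hη1.continuous
  have cη2 : Continuous η2 := hη2.continuous
  have II : ∀ {F : ℝ → ℂ}, Continuous F → IntervalIntegrable F volume 0 ℓ :=
    fun h => h.intervalIntegrable 0 ℓ
  have IIr : ∀ {F : ℝ → ℝ}, Continuous F → IntervalIntegrable F volume 0 ℓ :=
    fun h => h.intervalIntegrable 0 ℓ
  have ccη : Continuous (fun t => (starRingEnd ℂ) (η t)) := (smooth_conj hη').continuous
  have ccη1 : Continuous (fun t => (starRingEnd ℂ) (η1 t)) := (smooth_conj hη1).continuous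
  have ccη2 : Continuous (fun t => (starRingEnd ℂ) (η2 t)) := (smooth_conj hη2).continuous
  -- integral of A
  have hintA : (∫ t in (0:ℝ)..ℓ, A t) = (ℓ:ℂ) * m := by
    rw [hm]; field_simp
  -- derivative computations for w
  have hwf : w = fun t => -v2 t + v t := funext fun t => (heqv t).symm
  have hderiv_w : ∀ t, deriv w t = -v3 t + v1 t := by
    intro t
    rw [hwf]
    exact ((((diffble hv2) t).hasDerivAt.neg).add ((diffble hv') t).hasDerivAt).deriv
  have hderiv2_w : ∀ t, deriv (deriv w) t = -v4 t + v2 t := by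
    intro t
    have h : deriv w = fun s => -v3 s + v1 s := funext hderiv_w
    rw [h]
    exact ((((diffble hv3) t).hasDerivAt.neg).add ((diffble hv1) t).hasDerivAt).deriv
  have hderivA : ∀ t, deriv A t = v4 t - 2 * v2 t := by
    intro t
    have h := heqw t
    rw [hderiv2_w t, ← heqv t] at h
    linear_combination -h
  -- A - m = v3 - 2 v1
  have hAm : ∀ t, A t - m = v3 t - 2 * v1 t := by
    set G := fun t => A t - v3 t + 2 * v1 t with hGdef
    have hGd : Differentiable ℝ G :=
      ((diffble hA').sub (diffble hv3)).add ((diffble hv1).const_mul 2)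
    have hGderiv : ∀ t, deriv G t = 0 := by
      intro t
      have h1 : HasDerivAt G (deriv A t - v4 t + 2 * v2 t) t :=
        ((((diffble hA') t).hasDerivAt.sub ((diffble hv3) t).hasDerivAt).add
          ((((diffble hv1) t).hasDerivAt).const_mul 2))
      rw [h1.deriv, hderivA t]; ring
    have hGconst : ∀ t, G t = G 0 := fun t => is_const_of_deriv_eq_zero hGd hGderiv t 0
    have hint : (∫ t in (0:ℝ)..ℓ, G t) = (ℓ:ℂ) * G 0 := by
      have h2 : (∫ t in (0:ℝ)..ℓ, G t) = ∫ _t in (0:ℝ)..ℓ, G 0 :=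
        intervalIntegral.integral_congr (fun t _ => hGconst t)
      rw [h2, intervalIntegral.integral_const, sub_zero, Complex.real_smul]
    have hint2 : (∫ t in (0:ℝ)..ℓ, G t) = (ℓ:ℂ) * m := by
      have e0 : (∫ t in (0:ℝ)..ℓ, G t) = ∫ t in (0:ℝ)..ℓ, ((A t - v3 t) + 2 * v1 t) :=
        intervalIntegral.integral_congr (fun t _ => rfl)
      have e1 : (∫ t in (0:ℝ)..ℓ, ((A t - v3 t) + 2 * v1 t))
          = (∫ t in (0:ℝ)..ℓ, (A t - v3 t)) + ∫ t in (0:ℝ)..ℓ, 2 * v1 t :=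
        intervalIntegral.integral_add (II (cA.sub cv3)) (II (continuous_const.mul cv1))
      have e2 : (∫ t in (0:ℝ)..ℓ, (A t - v3 t))
          = (∫ t in (0:ℝ)..ℓ, A t) - ∫ t in (0:ℝ)..ℓ, v3 t :=
        intervalIntegral.integral_sub (II cA) (II cv3)
      have e3 : (∫ t in (0:ℝ)..ℓ, 2 * v1 t) = 2 * ∫ t in (0:ℝ)..ℓ, v1 t :=
        intervalIntegral.integral_const_mul _ _
      rw [e0, e1, e2, e3, hintA, integral_deriv_periodic hv2 hv2per,
        integral_deriv_periodic hv' hvper]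
      ring
    have hG0 : G 0 = m := mul_left_cancel₀ hℓ0 (hint.symm.trans hint2)
    intro t
    have h3 := (hGconst t).trans hG0
    simp only [hGdef] at h3
    linear_combination h3
  -- ζ := η + v'
  set ζ := fun t => η t + v1 t with hζdef
  have hζ : ContDiff ℝ (⊤:ℕ∞) ζ := hη'.add hv1
  have hζper : Function.Periodic ζ ℓ := by
    intro t; simp only [hζdef]; rw [hηper t, hv1per t]
  have hζ1 : ∀ t, deriv ζ t = η1 t + v2 t := fun t =>
    (((diffble hη') t).hasDerivAt.add ((diffble hv1) t).hasDerivAt).deriv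
  have hζ2 : ∀ t, deriv (deriv ζ) t = 2 * ζ t := by
    intro t
    have h : deriv ζ = fun s => η1 s + v2 s := funext hζ1
    rw [h]
    have h4 : deriv (fun s => η1 s + v2 s) t = η2 t + v3 t :=
      (((diffble hη1) t).hasDerivAt.add ((diffble hv2) t).hasDerivAt).deriv
    rw [h4]
    have h1 := heqη t
    have h2 := hAm t
    simp only [hζdef]
    linear_combination -h1 - h2
  -- ζ vanishes on (0, ℓ]
  have hζc : Continuous ζ := hζ.continuous
  have hζ1c : Continuous (deriv ζ) := (derivSmooth hζ).continuous
  have ccζ : Continuous (fun t => (starRingEnd ℂ) (ζ t)) := (smooth_conj hζ).continuous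
  have hsum : (∫ t in (0:ℝ)..ℓ, deriv ζ t * (starRingEnd ℂ) (deriv ζ t))
      + 2 * (∫ t in (0:ℝ)..ℓ, ζ t * (starRingEnd ℂ) (ζ t)) = 0 := by
    have e1 : (∫ t in (0:ℝ)..ℓ, deriv (deriv ζ) t * (starRingEnd ℂ) (ζ t))
        = ∫ t in (0:ℝ)..ℓ, 2 * (ζ t * (starRingEnd ℂ) (ζ t)) :=
      integral_congr fun t _ => by rw [hζ2 t]; ring
    have e1b : (∫ t in (0:ℝ)..ℓ, 2 * (ζ t * (starRingEnd ℂ) (ζ t)))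
        = 2 * ∫ t in (0:ℝ)..ℓ, ζ t * (starRingEnd ℂ) (ζ t) :=
      intervalIntegral.integral_const_mul _ _
    have e2 : (∫ t in (0:ℝ)..ℓ, deriv (deriv ζ) t * (starRingEnd ℂ) (ζ t))
        = -∫ t in (0:ℝ)..ℓ, deriv ζ t * (starRingEnd ℂ) (deriv ζ t) := by
      have h1 : (∫ t in (0:ℝ)..ℓ, deriv (deriv ζ) t * (starRingEnd ℂ) (ζ t))
          = ∫ t in (0:ℝ)..ℓ, (fun s => (starRingEnd ℂ) (ζ s)) t * deriv (deriv ζ) t :=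
        integral_congr fun t _ => mul_comm _ _
      rw [h1, ibp_periodic (smooth_conj hζ) (derivSmooth hζ) (periodic_conj hζper)
        (periodic_deriv hζper)]
      rw [neg_inj]
      exact integral_congr fun t _ => by rw [deriv_conj' (diffble hζ) t]; ring
    linear_combination e2 - e1.trans e1b
  have hra : (∫ t in (0:ℝ)..ℓ, deriv ζ t * (starRingEnd ℂ) (deriv ζ t))
      = ((∫ t in (0:ℝ)..ℓ, Complex.normSq (deriv ζ t) : ℝ) : ℂ) := by
    rw [← intervalIntegral.integral_ofReal]
    exact integral_congr fun t _ => (Complex.mul_conj _)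
  have hrd : (∫ t in (0:ℝ)..ℓ, ζ t * (starRingEnd ℂ) (ζ t))
      = ((∫ t in (0:ℝ)..ℓ, Complex.normSq (ζ t) : ℝ) : ℂ) := by
    rw [← intervalIntegral.integral_ofReal]
    exact integral_congr fun t _ => (Complex.mul_conj _)
  have hreal : (∫ t in (0:ℝ)..ℓ, (Complex.normSq (deriv ζ t) + 2 * Complex.normSq (ζ t))) = 0 := by
    have h5 : (∫ t in (0:ℝ)..ℓ, (Complex.normSq (deriv ζ t) + 2 * Complex.normSq (ζ t)))
        = (∫ t in (0:ℝ)..ℓ, Complex.normSq (deriv ζ t))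
          + ∫ t in (0:ℝ)..ℓ, 2 * Complex.normSq (ζ t) :=
      intervalIntegral.integral_add (IIr (Complex.continuous_normSq.comp hζ1c))
        (IIr (continuous_const.mul (Complex.continuous_normSq.comp hζc)))
    have h5b : (∫ t in (0:ℝ)..ℓ, 2 * Complex.normSq (ζ t))
        = 2 * ∫ t in (0:ℝ)..ℓ, Complex.normSq (ζ t) :=
      intervalIntegral.integral_const_mul _ _
    have h6 : (((∫ t in (0:ℝ)..ℓ, Complex.normSq (deriv ζ t))
        + 2 * ∫ t in (0:ℝ)..ℓ, Complex.normSq (ζ t) : ℝ) : ℂ) = 0 := by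
      push_cast
      rw [← hra, ← hrd]
      exact hsum
    rw [h5, h5b]
    exact_mod_cast h6
  have hζzero : ∀ t ∈ Ioc (0:ℝ) ℓ, ζ t = 0 := by
    have hcont : Continuous (fun t => Complex.normSq (deriv ζ t) + 2 * Complex.normSq (ζ t)) :=
      (Complex.continuous_normSq.comp hζ1c).add
        (continuous_const.mul (Complex.continuous_normSq.comp hζc))
    have hnn : ∀ t : ℝ, 0 ≤ Complex.normSq (deriv ζ t) + 2 * Complex.normSq (ζ t) := by
      intro t
      have h1 := Complex.normSq_nonneg (deriv ζ t)
      have h2 := Complex.normSq_nonneg (ζ t)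
      linarith
    have hae := (integral_eq_zero_iff_of_le_of_nonneg_ae hℓ.le (ae_of_all _ hnn)
      (IIr hcont)).mp hreal
    have heq : EqOn (fun t => Complex.normSq (deriv ζ t) + 2 * Complex.normSq (ζ t))
        (0 : ℝ → ℝ) (Ioc (0:ℝ) ℓ) :=
      Measure.eqOn_Ioc_of_ae_eq (μ := volume) hae hcont.continuousOn continuousOn_const
    intro t ht
    have h7 : Complex.normSq (deriv ζ t) + 2 * Complex.normSq (ζ t) = 0 := heq ht
    have h8 : Complex.normSq (ζ t) = 0 := by
      have h1 := Complex.normSq_nonneg (deriv ζ t)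
      have h2 := Complex.normSq_nonneg (ζ t)
      linarith
    exact Complex.normSq_eq_zero.mp h8
  -- main identity
  have step1 : (∫ t in (0:ℝ)..ℓ, w t * (starRingEnd ℂ) (deriv A t))
      = -∫ t in (0:ℝ)..ℓ, deriv w t * (starRingEnd ℂ) (A t) := by
    have h1 : (∫ t in (0:ℝ)..ℓ, w t * (starRingEnd ℂ) (deriv A t))
        = ∫ t in (0:ℝ)..ℓ, w t * deriv (fun s => (starRingEnd ℂ) (A s)) t :=
      integral_congr fun t _ => by rw [deriv_conj' (diffble hA') t]
    rw [h1, ibp_periodic hw' (smooth_conj hA') hwper (periodic_conj hAper)]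
  have hderiv_w' : ∀ t, deriv w t = -(A t - m) - v1 t := by
    intro t
    rw [hderiv_w t]
    linear_combination hAm t
  have step2 : (-∫ t in (0:ℝ)..ℓ, deriv w t * (starRingEnd ℂ) (A t))
      = ∫ t in (0:ℝ)..ℓ, ((A t - m) + v1 t) * (starRingEnd ℂ) (A t) := by
    rw [← intervalIntegral.integral_neg]
    exact integral_congr fun t _ => by rw [hderiv_w' t]; ring
  have step3 : (∫ t in (0:ℝ)..ℓ, ((A t - m) + v1 t) * (starRingEnd ℂ) (A t))
      = ∫ t in (0:ℝ)..ℓ, (A t - m - η t) * (starRingEnd ℂ) (A t) := by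
    rw [integral_of_le hℓ.le, integral_of_le hℓ.le]
    refine setIntegral_congr_fun measurableSet_Ioc fun t ht => ?_
    have h9 := hζzero t ht
    simp only [hζdef] at h9
    have h10 : v1 t = -η t := by linear_combination h9
    rw [h10]; ring
  have hmain : (∫ t in (0:ℝ)..ℓ, w t * (starRingEnd ℂ) (deriv A t))
      = ∫ t in (0:ℝ)..ℓ, (A t - m - η t) * (starRingEnd ℂ) (A t) :=
    step1.trans (step2.trans step3)
  refine ⟨hmain, ?_⟩
  -- mean of η is zero
  have hintη : (∫ t in (0:ℝ)..ℓ, η t) = 0 := by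
    have h1 : (∫ t in (0:ℝ)..ℓ, (-η2 t + 2 * η t)) = ∫ t in (0:ℝ)..ℓ, (A t - m) :=
      integral_congr fun t _ => heqη t
    have e1 : (∫ t in (0:ℝ)..ℓ, (-η2 t + 2 * η t))
        = (∫ t in (0:ℝ)..ℓ, -η2 t) + ∫ t in (0:ℝ)..ℓ, 2 * η t :=
      intervalIntegral.integral_add (II cη2.neg) (II (continuous_const.mul cη))
    have e2 : (∫ t in (0:ℝ)..ℓ, -η2 t) = -∫ t in (0:ℝ)..ℓ, η2 t :=
      intervalIntegral.integral_neg
    have e3 : (∫ t in (0:ℝ)..ℓ, 2 * η t) = 2 * ∫ t in (0:ℝ)..ℓ, η t :=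
      intervalIntegral.integral_const_mul _ _
    have h3 : (∫ t in (0:ℝ)..ℓ, (A t - m)) = 0 := by
      rw [intervalIntegral.integral_sub (II cA) intervalIntegrable_const, hintA,
        intervalIntegral.integral_const, sub_zero, Complex.real_smul]
      ring
    have h4 : (∫ t in (0:ℝ)..ℓ, η2 t) = 0 := integral_deriv_periodic hη1 hη1per
    rw [e1, e2, e3, h4, h3] at h1
    linear_combination h1 / 2
  have hint_Amη : (∫ t in (0:ℝ)..ℓ, (A t - m - η t)) = 0 := by
    rw [intervalIntegral.integral_sub (II (F := fun t => A t - m) (cA.sub continuous_const)) (II cη),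
      intervalIntegral.integral_sub (II cA) intervalIntegrable_const, hintA, hintη,
      intervalIntegral.integral_const, sub_zero, Complex.real_smul]
    ring
  -- drop the mean from the conjugate factor
  have hsub : (∫ t in (0:ℝ)..ℓ, (A t - m - η t) * (starRingEnd ℂ) (A t))
      = ∫ t in (0:ℝ)..ℓ, (A t - m - η t) * (starRingEnd ℂ) (A t - m) := by
    have h1 : (∫ t in (0:ℝ)..ℓ, (A t - m - η t) * (starRingEnd ℂ) (A t))
        = (∫ t in (0:ℝ)..ℓ, ((A t - m - η t) * (starRingEnd ℂ) (A t - m)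
            + (A t - m - η t) * (starRingEnd ℂ) m)) :=
      integral_congr fun t _ => by rw [map_sub]; ring
    have h2 : (∫ t in (0:ℝ)..ℓ, ((A t - m - η t) * (starRingEnd ℂ) (A t - m)
          + (A t - m - η t) * (starRingEnd ℂ) m))
        = (∫ t in (0:ℝ)..ℓ, (A t - m - η t) * (starRingEnd ℂ) (A t - m))
          + ∫ t in (0:ℝ)..ℓ, (A t - m - η t) * (starRingEnd ℂ) m :=
      intervalIntegral.integral_add
        (II (((cA.sub continuous_const).sub cη).mul
          (continuous_star.comp (cA.sub continuous_const))))
        (II (((cA.sub continuous_const).sub cη).mul continuous_const))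
    have h3 : (∫ t in (0:ℝ)..ℓ, (A t - m - η t) * (starRingEnd ℂ) m)
        = (∫ t in (0:ℝ)..ℓ, (A t - m - η t)) * (starRingEnd ℂ) m :=
      intervalIntegral.integral_mul_const _ _
    rw [h1, h2, h3, hint_Amη, zero_mul, add_zero]
  -- rewrite using the ODE for η, split into four integrals
  set Ia := ∫ t in (0:ℝ)..ℓ, η2 t * (starRingEnd ℂ) (η2 t) with hIa
  set Ib := ∫ t in (0:ℝ)..ℓ, η2 t * (starRingEnd ℂ) (η t) with hIb
  set Ic := ∫ t in (0:ℝ)..ℓ, η t * (starRingEnd ℂ) (η2 t) with hIc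
  set Id := ∫ t in (0:ℝ)..ℓ, η t * (starRingEnd ℂ) (η t) with hId
  set Ie := ∫ t in (0:ℝ)..ℓ, η1 t * (starRingEnd ℂ) (η1 t) with hIe
  have hstep : (∫ t in (0:ℝ)..ℓ, (A t - m - η t) * (starRingEnd ℂ) (A t - m))
      = ∫ t in (0:ℝ)..ℓ, (((η2 t * (starRingEnd ℂ) (η2 t)
          - 2 * (η2 t * (starRingEnd ℂ) (η t)))
          - η t * (starRingEnd ℂ) (η2 t))
          + 2 * (η t * (starRingEnd ℂ) (η t))) := by
    refine integral_congr fun t _ => ?_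
    have h1 := heqη t
    rw [← h1, map_add, map_neg, map_mul]
    have h2 : (starRingEnd ℂ) (2:ℂ) = 2 := map_ofNat _ 2
    rw [h2]
    ring
  have s4 : (∫ t in (0:ℝ)..ℓ, 2 * (η t * (starRingEnd ℂ) (η t))) = 2 * Id :=
    intervalIntegral.integral_const_mul _ _
  have s2 : (∫ t in (0:ℝ)..ℓ, 2 * (η2 t * (starRingEnd ℂ) (η t))) = 2 * Ib :=
    intervalIntegral.integral_const_mul _ _
  have sA : (∫ t in (0:ℝ)..ℓ, (η2 t * (starRingEnd ℂ) (η2 t)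
        - 2 * (η2 t * (starRingEnd ℂ) (η t))))
      = Ia - ∫ t in (0:ℝ)..ℓ, 2 * (η2 t * (starRingEnd ℂ) (η t)) :=
    intervalIntegral.integral_sub (II (cη2.mul ccη2))
      (II (continuous_const.mul (cη2.mul ccη)))
  have sB : (∫ t in (0:ℝ)..ℓ, ((η2 t * (starRingEnd ℂ) (η2 t)
        - 2 * (η2 t * (starRingEnd ℂ) (η t))) - η t * (starRingEnd ℂ) (η2 t)))
      = (∫ t in (0:ℝ)..ℓ, (η2 t * (starRingEnd ℂ) (η2 t)
          - 2 * (η2 t * (starRingEnd ℂ) (η t)))) - Ic :=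
    intervalIntegral.integral_sub
      (II ((cη2.mul ccη2).sub (continuous_const.mul (cη2.mul ccη))))
      (II (cη.mul ccη2))
  have sC : (∫ t in (0:ℝ)..ℓ, (((η2 t * (starRingEnd ℂ) (η2 t)
        - 2 * (η2 t * (starRingEnd ℂ) (η t)))
        - η t * (starRingEnd ℂ) (η2 t))
        + 2 * (η t * (starRingEnd ℂ) (η t))))
      = (∫ t in (0:ℝ)..ℓ, ((η2 t * (starRingEnd ℂ) (η2 t)
          - 2 * (η2 t * (starRingEnd ℂ) (η t))) - η t * (starRingEnd ℂ) (η2 t)))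
        + ∫ t in (0:ℝ)..ℓ, 2 * (η t * (starRingEnd ℂ) (η t)) :=
    intervalIntegral.integral_add
      (II (((cη2.mul ccη2).sub (continuous_const.mul (cη2.mul ccη))).sub (cη.mul ccη2)))
      (II (continuous_const.mul (cη.mul ccη)))
  have hsplit4 : (∫ t in (0:ℝ)..ℓ, (A t - m - η t) * (starRingEnd ℂ) (A t - m))
      = ((Ia - 2 * Ib) - Ic) + 2 * Id := by
    rw [hstep, sC, sB, sA, s2, s4]
  -- integration by parts for Ib and Ic
  have hIb_eq : Ib = -Ie := by
    rw [hIb, hIe]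
    have h1 : (∫ t in (0:ℝ)..ℓ, η2 t * (starRingEnd ℂ) (η t))
        = ∫ t in (0:ℝ)..ℓ, (fun s => (starRingEnd ℂ) (η s)) t * deriv η1 t :=
      integral_congr fun t _ => mul_comm _ _
    rw [h1, ibp_periodic (smooth_conj hη') hη1 (periodic_conj hηper) hη1per, neg_inj]
    exact integral_congr fun t _ => by rw [deriv_conj' (diffble hη') t]; ring
  have hIc_eq : Ic = -Ie := by
    rw [hIc, hIe]
    have h1 : (∫ t in (0:ℝ)..ℓ, η t * (starRingEnd ℂ) (η2 t))
        = ∫ t in (0:ℝ)..ℓ, η t * deriv (fun s => (starRingEnd ℂ) (η1 s)) t :=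
      integral_congr fun t _ => by rw [deriv_conj' (diffble hη1) t]
    rw [h1, ibp_periodic hη' (smooth_conj hη1) hηper (periodic_conj hη1per), neg_inj]
  -- each diagonal integral is a nonneg real
  have hIa_real : Ia = ((∫ t in (0:ℝ)..ℓ, Complex.normSq (η2 t) : ℝ) : ℂ) := by
    rw [hIa, ← intervalIntegral.integral_ofReal]
    exact integral_congr fun t _ => (Complex.mul_conj _)
  have hId_real : Id = ((∫ t in (0:ℝ)..ℓ, Complex.normSq (η t) : ℝ) : ℂ) := by
    rw [hId, ← intervalIntegral.integral_ofReal]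
    exact integral_congr fun t _ => (Complex.mul_conj _)
  have hIe_real : Ie = ((∫ t in (0:ℝ)..ℓ, Complex.normSq (η1 t) : ℝ) : ℂ) := by
    rw [hIe, ← intervalIntegral.integral_ofReal]
    exact integral_congr fun t _ => (Complex.mul_conj _)
  have hra_nn : 0 ≤ (∫ t in (0:ℝ)..ℓ, Complex.normSq (η2 t) : ℝ) :=
    intervalIntegral.integral_nonneg hℓ.le (fun t _ => Complex.normSq_nonneg _)
  have hrd_nn : 0 ≤ (∫ t in (0:ℝ)..ℓ, Complex.normSq (η t) : ℝ) :=
    intervalIntegral.integral_nonneg hℓ.le (fun t _ => Complex.normSq_nonneg _)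
  have hre_nn : 0 ≤ (∫ t in (0:ℝ)..ℓ, Complex.normSq (η1 t) : ℝ) :=
    intervalIntegral.integral_nonneg hℓ.le (fun t _ => Complex.normSq_nonneg _)
  have hfinal : (∫ t in (0:ℝ)..ℓ, w t * (starRingEnd ℂ) (deriv A t))
      = (((∫ t in (0:ℝ)..ℓ, Complex.normSq (η2 t))
          + 3 * (∫ t in (0:ℝ)..ℓ, Complex.normSq (η1 t))
          + 2 * (∫ t in (0:ℝ)..ℓ, Complex.normSq (η t)) : ℝ) : ℂ) := by
    rw [hmain, hsub, hsplit4, hIb_eq, hIc_eq, hIa_real, hId_real, hIe_real]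
    push_cast
    ring
  constructor
  · rw [hfinal]
    exact Complex.ofReal_im _
  · rw [hfinal, Complex.ofReal_re]
    linarith
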